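/- Let (M,g) be a smooth compact connected Riemannian manifold of dimension n ≥ 3 with boundary, λ ∈ ℝ, Γ_D, Γ_N disjoint open subsets of ∂M, and c a smooth strictly positive function on M with c = 1 on Γ_D ∪ Γ_N. If u ∈ H¹(M) solves −Δ_{c⁴g} u = λu on M with u = ψ on Γ_D and u = 0 on ∂M \ Γ_D, then v := c^{n-2} u solves (−Δ_g + V_{g,c,λ}) v = λ v on M with v = ψ on Γ_D and v = 0 on ∂M \ Γ_D, where V_{g,c,λ} = c^{-(n-2)} Δ_g(c^{n-2}) + λ(1 − c⁴). -/

import Mathlib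

open scoped BigOperators

/-- Partial derivative in the `i`-th coordinate direction. -/
noncomputable def pd {n : ℕ} (i : Fin n) (f : (Fin n → ℝ) → ℝ) (x : Fin n → ℝ) : ℝ :=
  fderiv ℝ f x (Pi.single i 1)

/-- The Laplace–Beltrami operator of a Riemannian metric `g` in coordinates. -/
noncomputable def lapBel {n : ℕ} (g : (Fin n → ℝ) → Matrix (Fin n) (Fin n) ℝ)
    (u : (Fin n → ℝ) → ℝ) (x : Fin n → ℝ) : ℝ :=
  (Real.sqrt (g x).det)⁻¹ *
    ∑ i, pd i (fun y => Real.sqrt (g y).det * ∑ j, (g y)⁻¹ i j * pd j u y) x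
section aux
variable {n : ℕ} {x : Fin n → ℝ}

lemma pd_congr_nhds {i : Fin n} {f h : (Fin n → ℝ) → ℝ} (he : f =ᶠ[nhds x] h) :
    pd i f x = pd i h x := by unfold pd; rw [he.fderiv_eq]

lemma pd_mul {i : Fin n} {f h : (Fin n → ℝ) → ℝ} (hf : DifferentiableAt ℝ f x)
    (hh : DifferentiableAt ℝ h x) :
    pd i (fun y => f y * h y) x = pd i f x * h x + f x * pd i h x := by
  unfold pd; rw [fderiv_fun_mul hf hh]; simp [mul_comm]; ring

lemma pd_add {i : Fin n} {f h : (Fin n → ℝ) → ℝ} (hf : DifferentiableAt ℝ f x)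
    (hh : DifferentiableAt ℝ h x) :
    pd i (fun y => f y + h y) x = pd i f x + pd i h x := by
  unfold pd; rw [fderiv_fun_add hf hh]; simp

lemma pd_sum {ι : Type*} (s : Finset ι) {i : Fin n} {f : ι → (Fin n → ℝ) → ℝ}
    (hf : ∀ j ∈ s, DifferentiableAt ℝ (f j) x) :
    pd i (fun y => ∑ j ∈ s, f j y) x = ∑ j ∈ s, pd i (f j) x := by
  unfold pd; rw [fderiv_fun_sum hf]; simp

lemma contDiff_finset_prod {ι : Type*} (s : Finset ι) (f : ι → (Fin n → ℝ) → ℝ)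
    (h : ∀ i ∈ s, ContDiff ℝ (⊤ : ℕ∞) (f i)) :
    ContDiff ℝ (⊤ : ℕ∞) (fun y => ∏ i ∈ s, f i y) := by
  classical
  induction s using Finset.induction_on with
  | empty => simpa using contDiff_const
  | insert _ _ hns ih =>
    simp only [Finset.prod_insert hns]
    exact (h _ (Finset.mem_insert_self _ _)).mul
      (ih fun i hi => h i (Finset.mem_insert_of_mem hi))

lemma contDiff_det {m : ℕ} {M : (Fin n → ℝ) → Matrix (Fin m) (Fin m) ℝ}
    (h : ∀ i j, ContDiff ℝ (⊤ : ℕ∞) fun y => M y i j) : ContDiff ℝ (⊤ : ℕ∞) fun y => (M y).det := by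
  simp only [Matrix.det_apply]
  refine ContDiff.sum fun σ _ => ?_
  have : ContDiff ℝ (⊤ : ℕ∞) fun y => ∏ i, M y (σ i) i := contDiff_finset_prod _ _ fun i _ => h _ _
  simpa [Units.smul_def, zsmul_eq_mul] using this.const_smul ((Equiv.Perm.sign σ : ℤ) : ℝ)

variable {g : (Fin n → ℝ) → Matrix (Fin n) (Fin n) ℝ}

lemma contDiff_inv_entry (hgpd : ∀ x, (g x).PosDef)
    (hgsm : ∀ i j, ContDiff ℝ (⊤ : ℕ∞) fun x => g x i j) (i j : Fin n) :
    ContDiff ℝ (⊤ : ℕ∞) fun y => (g y)⁻¹ i j := by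
  have hdet : ContDiff ℝ (⊤ : ℕ∞) fun y => (g y).det := contDiff_det hgsm
  have hne : ∀ y, (g y).det ≠ 0 := fun y => ne_of_gt (hgpd y).det_pos
  have hadj : ContDiff ℝ (⊤ : ℕ∞) fun y => (g y).adjugate i j := by
    simp only [Matrix.adjugate_apply]
    refine contDiff_det (M := fun y => (g y).updateRow j (Pi.single i 1)) fun a b => ?_
    rcases eq_or_ne a j with rfl | hne
    · simpa [Matrix.updateRow_apply] using contDiff_const
    · simpa [Matrix.updateRow_apply, hne] using hgsm a b
  have heq : (fun y => (g y)⁻¹ i j) = fun y => ((g y).det)⁻¹ * (g y).adjugate i j := by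
    funext y
    rw [Matrix.inv_def, Ring.inverse_eq_inv', Matrix.smul_apply, smul_eq_mul]
  rw [heq]; exact (hdet.inv hne).mul hadj

lemma inv_symm (hgpd : ∀ x, (g x).PosDef) (x : Fin n → ℝ) (i j : Fin n) :
    (g x)⁻¹ i j = (g x)⁻¹ j i := by
  have h := (hgpd x).isHermitian.inv
  simpa using (h.apply i j).symm

lemma conf_sqrt_det (hgpd : ∀ x, (g x).PosDef) (c : (Fin n → ℝ) → ℝ)
    (hcpos : ∀ x, 0 < c x) (y : Fin n → ℝ) :
    Real.sqrt ((c y ^ 4 • g y).det) = c y ^ (2*n) * Real.sqrt ((g y).det) := by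
  rw [Matrix.det_smul]
  have h1 : (c y ^ 4) ^ Fintype.card (Fin n) * (g y).det
      = (c y ^ (2*n))^2 * (g y).det := by rw [Fintype.card_fin]; ring
  rw [h1, Real.sqrt_mul (sq_nonneg _), Real.sqrt_sq (pow_nonneg (hcpos y).le _)]

lemma conf_inv_entry (hgpd : ∀ x, (g x).PosDef) (c : (Fin n → ℝ) → ℝ)
    (hcpos : ∀ x, 0 < c x) (y : Fin n → ℝ) (i j : Fin n) :
    (c y ^ 4 • g y)⁻¹ i j = (c y ^ 4)⁻¹ * (g y)⁻¹ i j := by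
  have hk : c y ^ 4 ≠ 0 := by have := hcpos y; positivity
  letI := invertibleOfNonzero hk
  rw [Matrix.inv_smul (c y ^ 4) (A := g y) (isUnit_iff_ne_zero.mpr (hgpd y).det_pos.ne'),
    Matrix.smul_apply, smul_eq_mul, invOf_eq_inv]

lemma pd_inner {i : Fin n} {s : (Fin n → ℝ) → ℝ} {A e : Fin n → (Fin n → ℝ) → ℝ}
    (hs : DifferentiableAt ℝ s x) (hA : ∀ j, DifferentiableAt ℝ (A j) x)
    (he : ∀ j, DifferentiableAt ℝ (e j) x) :
    pd i (fun y => s y * ∑ j, A j y * e j y) x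
      = ∑ j, (pd i s x * (A j x * e j x)
          + s x * (pd i (A j) x * e j x + A j x * pd i (e j) x)) := by
  have hsum : DifferentiableAt ℝ (fun y => ∑ j, A j y * e j y) x :=
    DifferentiableAt.fun_sum fun j _ => (hA j).mul (he j)
  rw [pd_mul hs hsum, pd_sum Finset.univ (f := fun j y => A j y * e j y) (fun j _ => (hA j).mul (he j))]
  rw [Finset.mul_sum, Finset.mul_sum, ← Finset.sum_add_distrib]
  refine Finset.sum_congr rfl fun j _ => ?_
  rw [pd_mul (hA j) (he j)]

end aux

lemma key {n : ℕ} {g : (Fin n → ℝ) → Matrix (Fin n) (Fin n) ℝ}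
    (hgpd : ∀ x, (g x).PosDef) (hgsm : ∀ i j, ContDiff ℝ (⊤ : ℕ∞) fun x => g x i j)
    {c : (Fin n → ℝ) → ℝ} (hc : ContDiff ℝ (⊤ : ℕ∞) c) (hcpos : ∀ x, 0 < c x)
    {u : (Fin n → ℝ) → ℝ} {Ω : Set (Fin n → ℝ)} (hΩo : IsOpen Ω)
    (hu : ContDiffOn ℝ 2 u Ω) {x : Fin n → ℝ} (hx : x ∈ Ω) (hn2 : 2 ≤ n) :
    lapBel g (fun y => c y ^ (n-2) * u y) x
      = u x * lapBel g (fun y => c y ^ (n-2)) x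
        + c x ^ n * c x ^ 2 * lapBel (fun y => c y ^ 4 • g y) u x := by
  classical
  set m := n - 2 with hm
  -- basic differentiability facts
  have hdet : ContDiff ℝ (⊤ : ℕ∞) fun y => (g y).det := contDiff_det hgsm
  have hs_d : ∀ y, DifferentiableAt ℝ (fun z => Real.sqrt (g z).det) y := by
    intro y
    have : ContDiffAt ℝ (⊤ : ℕ∞) (fun z => Real.sqrt (g z).det) y :=
      (Real.contDiffAt_sqrt (hgpd y).det_pos.ne').comp y hdet.contDiffAt
    exact this.differentiableAt (by simp)
  have hA_d : ∀ i j y, DifferentiableAt ℝ (fun z => (g z)⁻¹ i j) y := fun i j y =>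
    ((contDiff_inv_entry hgpd hgsm i j).differentiable (by simp)) y
  have hwC : ContDiff ℝ (⊤ : ℕ∞) fun y => c y ^ m := hc.pow m
  have hw_d : ∀ y, DifferentiableAt ℝ (fun z => c z ^ m) y := fun y =>
    (hwC.differentiable (by simp)) y
  have hqC : ∀ j : Fin n, ContDiff ℝ (⊤ : ℕ∞) fun y => pd j (fun z => c z ^ m) y := by
    intro j
    have h1 : ContDiff ℝ (⊤ : ℕ∞) (fderiv ℝ fun z => c z ^ m) := hwC.fderiv_right (by simp)
    exact h1.clm_apply contDiff_const
  have hq_d : ∀ (j : Fin n) y, DifferentiableAt ℝ (fun z => pd j (fun w => c w ^ m) z) y :=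
    fun j y => ((hqC j).differentiable (by simp)) y
  have hu_d : ∀ y ∈ Ω, DifferentiableAt ℝ u y := fun y hy =>
    ((hu.contDiffAt (hΩo.mem_nhds hy)).differentiableAt (by norm_num))
  have hP_d : ∀ j : Fin n, DifferentiableAt ℝ (fun y => pd j u y) x := by
    intro j
    have h2 : ContDiffAt ℝ 2 u x := hu.contDiffAt (hΩo.mem_nhds hx)
    have h1 : ContDiffAt ℝ 1 (fderiv ℝ u) x := h2.fderiv_right (by norm_num)
    exact (h1.clm_apply contDiffAt_const).differentiableAt one_ne_zero
  -- notation
  set S := Real.sqrt (g x).det with hS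
  -- the three per-i expansions
  have h1 : ∀ i : Fin n,
      pd i (fun y => Real.sqrt (g y).det *
          ∑ j, (g y)⁻¹ i j * pd j (fun z => c z ^ m * u z) y) x
        = ∑ j, (pd i (fun y => Real.sqrt (g y).det) x *
              ((g x)⁻¹ i j * (pd j (fun z => c z ^ m) x * u x + c x ^ m * pd j u x))
            + S * (pd i (fun y => (g y)⁻¹ i j) x *
                  (pd j (fun z => c z ^ m) x * u x + c x ^ m * pd j u x)
              + (g x)⁻¹ i j *
                  ((pd i (fun y => pd j (fun z => c z ^ m) y) x * u x
                      + pd j (fun z => c z ^ m) x * pd i u x)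
                    + (pd i (fun z => c z ^ m) x * pd j u x
                      + c x ^ m * pd i (fun y => pd j u y) x)))) := by
    intro i
    have hev : (fun y => Real.sqrt (g y).det *
          ∑ j, (g y)⁻¹ i j * pd j (fun z => c z ^ m * u z) y) =ᶠ[nhds x]
        (fun y => Real.sqrt (g y).det *
          ∑ j, (g y)⁻¹ i j *
            (pd j (fun z => c z ^ m) y * u y + c y ^ m * pd j u y)) := by
      filter_upwards [hΩo.mem_nhds hx] with y hy
      congr 1
      refine Finset.sum_congr rfl fun j _ => ?_
      rw [pd_mul (hw_d y) (hu_d y hy)]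
    rw [pd_congr_nhds hev]
    refine (pd_inner (hs_d x) (fun j => hA_d i j x) (fun j => ?_)).trans ?_
    · exact ((hq_d j x).mul (hu_d x hx)).add ((hw_d x).mul (hP_d j))
    refine Finset.sum_congr rfl fun j _ => ?_
    rw [pd_add ((hq_d j x).fun_mul (hu_d x hx)) ((hw_d x).fun_mul (hP_d j)),
      pd_mul (hq_d j x) (hu_d x hx), pd_mul (hw_d x) (hP_d j)]
  have h2 : ∀ i : Fin n,
      pd i (fun y => Real.sqrt (g y).det *
          ∑ j, (g y)⁻¹ i j * pd j (fun z => c z ^ m) y) x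
        = ∑ j, (pd i (fun y => Real.sqrt (g y).det) x *
              ((g x)⁻¹ i j * pd j (fun z => c z ^ m) x)
            + S * (pd i (fun y => (g y)⁻¹ i j) x * pd j (fun z => c z ^ m) x
              + (g x)⁻¹ i j * pd i (fun y => pd j (fun z => c z ^ m) y) x)) := by
    intro i
    exact pd_inner (hs_d x) (fun j => hA_d i j x) (fun j => hq_d j x)
  have h3 : ∀ i : Fin n,
      pd i (fun y => (c y ^ m * c y ^ m) *
          (Real.sqrt (g y).det * ∑ j, (g y)⁻¹ i j * pd j u y)) x
        = ∑ j, ((pd i (fun z => c z ^ m) x * c x ^ m + c x ^ m * pd i (fun z => c z ^ m) x)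
              * (S * ((g x)⁻¹ i j * pd j u x))
            + (c x ^ m * c x ^ m) *
              (pd i (fun y => Real.sqrt (g y).det) x * ((g x)⁻¹ i j * pd j u x)
                + S * (pd i (fun y => (g y)⁻¹ i j) x * pd j u x
                  + (g x)⁻¹ i j * pd i (fun y => pd j u y) x))) := by
    intro i
    have hin_d : DifferentiableAt ℝ
        (fun y => Real.sqrt (g y).det * ∑ j, (g y)⁻¹ i j * pd j u y) x :=
      (hs_d x).mul (DifferentiableAt.fun_sum fun j _ => (hA_d i j x).fun_mul (hP_d j))
    rw [pd_mul ((hw_d x).fun_mul (hw_d x)) hin_d, pd_mul (hw_d x) (hw_d x),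
      pd_inner (hs_d x) (fun j => hA_d i j x) (fun j => hP_d j)]
    simp only [Finset.mul_sum]
    rw [← Finset.sum_add_distrib]
  -- conformal rewriting of the inner function for the metric c⁴g
  have hconf : ∀ i : Fin n,
      (fun y => Real.sqrt ((c y ^ 4 • g y)).det * ∑ j, (c y ^ 4 • g y)⁻¹ i j * pd j u y)
        = (fun y => (c y ^ m * c y ^ m) *
            (Real.sqrt (g y).det * ∑ j, (g y)⁻¹ i j * pd j u y)) := by
    intro i; funext y
    have hsum : ∑ j, (c y ^ 4 • g y)⁻¹ i j * pd j u y
        = (c y ^ 4)⁻¹ * ∑ j, (g y)⁻¹ i j * pd j u y := by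
      rw [Finset.mul_sum]
      exact Finset.sum_congr rfl fun j _ => by
        rw [conf_inv_entry hgpd c hcpos y i j]; ring
    rw [conf_sqrt_det hgpd c hcpos y, hsum]
    have hc0 : c y ≠ 0 := (hcpos y).ne'
    have hpow : c y ^ (2*n) = c y ^ m * c y ^ m * c y ^ 4 := by
      rw [← pow_add, ← pow_add]; congr 1; omega
    rw [hpow]; field_simp
  -- unfold lapBel and rewrite
  simp only [lapBel]
  rw [conf_sqrt_det hgpd c hcpos x]
  have t1 := Finset.sum_congr rfl (fun i (_ : i ∈ (Finset.univ : Finset (Fin n))) => h1 i)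
  have t2 := Finset.sum_congr rfl (fun i (_ : i ∈ (Finset.univ : Finset (Fin n))) => h2 i)
  have t3a := Finset.sum_congr rfl
    (fun i (_ : i ∈ (Finset.univ : Finset (Fin n))) => by rw [hconf i] :
      ∀ i ∈ (Finset.univ : Finset (Fin n)),
        pd i (fun y => Real.sqrt ((c y ^ 4 • g y)).det *
            ∑ j, (c y ^ 4 • g y)⁻¹ i j * pd j u y) x
          = pd i (fun y => (c y ^ m * c y ^ m) *
              (Real.sqrt (g y).det * ∑ j, (g y)⁻¹ i j * pd j u y)) x)
  have t3b := Finset.sum_congr rfl (fun i (_ : i ∈ (Finset.univ : Finset (Fin n))) => h3 i)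
  rw [t1, t2, t3a, t3b]
  -- abstract algebra step
  have hS0 : S ≠ 0 := (Real.sqrt_pos.mpr (hgpd x).det_pos).ne'
  have hc0 : c x ≠ 0 := (hcpos x).ne'
  have habs : ∀ A B C : ℝ, c x ^ m * A = c x ^ m * u x * B + C →
      S⁻¹ * A = u x * (S⁻¹ * B)
        + c x ^ n * c x ^ 2 * ((c x ^ (2*n) * S)⁻¹ * C) := by
    intro A B C hABC
    have hC : C = c x ^ m * A - c x ^ m * u x * B := by linarith
    have hpow : c x ^ (2*n) = c x ^ n * c x ^ 2 * c x ^ m := by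
      rw [← pow_add, ← pow_add]; congr 1; omega
    rw [hC, hpow]
    field_simp
    ring
  refine habs _ _ _ ?_
  -- the key sum identity
  rw [← sub_eq_zero]
  have target0 :
      (∑ i : Fin n, ∑ j : Fin n, c x ^ m *
          (S * ((g x)⁻¹ i j * (pd j (fun z => c z ^ m) x * pd i u x))))
        - (∑ i : Fin n, ∑ j : Fin n, c x ^ m *
          (S * ((g x)⁻¹ i j * (pd i (fun z => c z ^ m) x * pd j u x)))) = 0 := by
    rw [Finset.sum_comm, sub_eq_zero]
    exact Finset.sum_congr rfl fun i _ => Finset.sum_congr rfl fun j _ => by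
      rw [inv_symm hgpd x j i]
  refine Eq.trans ?_ target0
  simp only [Finset.mul_sum, ← Finset.sum_sub_distrib, ← Finset.sum_add_distrib]
  refine Finset.sum_congr rfl fun i _ => ?_
  refine Finset.sum_congr rfl fun j _ => ?_
  ring


/-- If `c = 1` on `Γ_D ∪ Γ_N` and `u` solves `−Δ_{c⁴g} u = λu` with `u = ψ` on `Γ_D` and
`u = 0` on `∂M \ Γ_D`, then `v = c^{n-2} u` solves `(−Δ_g + V_{g,c,λ}) v = λv` with the
same boundary data, where `V_{g,c,λ} = c^{-(n-2)} Δ_g(c^{n-2}) + λ(1 − c⁴)`. -/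
theorem stmt14 {n : ℕ} (hn : 3 ≤ n)
    (Ω : Set (Fin n → ℝ)) (hΩo : IsOpen Ω) (hΩconn : IsConnected Ω)
    (hΩb : Bornology.IsBounded Ω)
    (g : (Fin n → ℝ) → Matrix (Fin n) (Fin n) ℝ)
    (hgpd : ∀ x, (g x).PosDef)
    (hgsm : ∀ i j, ContDiff ℝ (⊤ : ℕ∞) fun x => g x i j)
    (lam : ℝ)
    (ΓD ΓN : Set (Fin n → ℝ)) (hΓD : ΓD ⊆ frontier Ω) (hΓN : ΓN ⊆ frontier Ω)
    (hΓDopen : ∃ U, IsOpen U ∧ ΓD = U ∩ frontier Ω)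
    (hΓNopen : ∃ U, IsOpen U ∧ ΓN = U ∩ frontier Ω)
    (hdisj : Disjoint ΓD ΓN)
    (c : (Fin n → ℝ) → ℝ) (hc : ContDiff ℝ (⊤ : ℕ∞) c) (hcpos : ∀ x, 0 < c x)
    (hc1 : ∀ x ∈ ΓD ∪ ΓN, c x = 1)
    (ψ : (Fin n → ℝ) → ℝ)
    (u : (Fin n → ℝ) → ℝ) (hureg : ContDiffOn ℝ 2 u (closure Ω))
    (hpde : ∀ x ∈ Ω, -(lapBel (fun y => (c y) ^ 4 • g y) u x) = lam * u x)
    (hbcD : ∀ x ∈ ΓD, u x = ψ x)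
    (hbc0 : ∀ x ∈ frontier Ω \ ΓD, u x = 0) :
    (∀ x ∈ Ω,
      -(lapBel g (fun y => (c y) ^ (n - 2) * u y) x)
        + ((c x) ^ (-((n : ℤ) - 2)) * lapBel g (fun y => (c y) ^ (n - 2)) x
            + lam * (1 - (c x) ^ 4)) * ((c x) ^ (n - 2) * u x)
        = lam * ((c x) ^ (n - 2) * u x)) ∧
    (∀ x ∈ ΓD, (c x) ^ (n - 2) * u x = ψ x) ∧
    (∀ x ∈ frontier Ω \ ΓD, (c x) ^ (n - 2) * u x = 0) := by

  refine ⟨?_, ?_, ?_⟩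
  · intro x hx
    have hu : ContDiffOn ℝ 2 u Ω := hureg.mono subset_closure
    have hk := key hgpd hgsm hc hcpos hΩo hu hx (by omega)
    have hΛ : lapBel (fun y => c y ^ 4 • g y) u x = -(lam * u x) := by
      have := hpde x hx; linarith
    rw [hk, hΛ]
    have hz : (c x) ^ (-((n : ℤ) - 2)) = ((c x) ^ (n - 2))⁻¹ := by
      have h1 : -((n : ℤ) - 2) = -((n - 2 : ℕ) : ℤ) := by omega
      rw [h1, zpow_neg, zpow_natCast]
    rw [hz]
    have hpow : c x ^ n * c x ^ 2 = c x ^ (n - 2) * c x ^ 4 := by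
      rw [← pow_add, ← pow_add]; congr 1; omega
    rw [hpow]
    have hK : (c x) ^ (n - 2) ≠ 0 := pow_ne_zero _ (hcpos x).ne'
    field_simp
    ring
  · intro x hxD
    rw [hc1 x (Set.mem_union_left _ hxD), one_pow, one_mul]
    exact hbcD x hxD
  · intro x hx
    rw [hbc0 x hx, mul_zero]
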